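/- Fix integers a, b ≥ 1 and let M₁₁, M₁₂, M₂₁, M₂₂ ∈ ℤ[q] be the rank-matrix entries of the box poset Fin a × Fin b defined combinatorially below. Then the polynomial M₁₁·M₂₂ − M₁₂·M₂₁ (the determinant of the rank matrix of B_{a×b}) is (2ab)-palindromic: its natDegree is at most 2ab and its coefficient of q^j equals its coefficient of q^{2ab−j} for all 0 ≤ j ≤ 2ab. -/

import Mathlib

open Polynomial

/-- A polynomial `p ∈ ℤ[q]` is `N`-palindromic if `natDegree p ≤ N` and
`coeff j = coeff (N - j)` for all `0 ≤ j ≤ N`. -/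
def IsPalindromic (p : Polynomial ℤ) (d : ℕ) : Prop :=
  p.natDegree ≤ d ∧ ∀ j ≤ d, p.coeff j = p.coeff (d - j)

/-- The lower sets of the box poset `Fin a × Fin b` with the componentwise order. -/
def boxLowerSets (a b : ℕ) : Finset (Finset (Fin a × Fin b)) :=
  Finset.univ.filter (fun I =>
    ∀ p ∈ I, ∀ p' : Fin a × Fin b, p'.1 ≤ p.1 → p'.2 ≤ p.2 → p' ∈ I)

/-- Partial rank polynomial of the box poset: `∑ q^|I|` over lower sets `I`
satisfying the constraint `P`. -/
noncomputable def boxEntry (a b : ℕ) (P : Finset (Fin a × Fin b) → Prop)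
    [DecidablePred P] : Polynomial ℤ :=
  ∑ I ∈ (boxLowerSets a b).filter P, X ^ I.card

/-!
The map `I ↦ rev(Iᶜ)`, with `rev` the point reflection of the box, is an involution on lower
sets sending size `k` to `ab - k` and exchanging the conditions `x_R ∈ I` and `x_L ∉ I`.
Splitting by membership of `x_R` and `x_L` into `A = [x_R ∈, x_L ∈]`, `B = [x_R ∈, x_L ∉]`,
`C = [x_R ∉, x_L ∈]`, `D = [x_R ∉, x_L ∉]`, the determinant is
`(A + B) D - (C + D) B = A D - C B`, and the involution reverses `A` into `D` while fixing
`B` and `C`; so the determinant is invariant under reversal at degree `2ab`.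
-/

open Finset

theorem isPalindromic_of_reflect_eq {p : ℤ[X]} {N : ℕ} (hdeg : p.natDegree ≤ N)
    (h : p.reflect N = p) : IsPalindromic p N :=
  ⟨hdeg, fun j hj => by rw [← h, coeff_reflect, revAt_le hj, h]⟩

theorem isPalindromic_det_of_reflect {A B C D : ℤ[X]} {N : ℕ} (hA : A.natDegree ≤ N)
    (hB : B.natDegree ≤ N) (hC : C.natDegree ≤ N) (hD : D.natDegree ≤ N)
    (hAD : A.reflect N = D) (hBB : B.reflect N = B) (hCC : C.reflect N = C) :
    IsPalindromic ((A + B) * D - (C + D) * B) (2 * N) := by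
  have hDA : D.reflect N = A := by rw [← hAD, reflect_reflect]
  have hdet : (A + B) * D - (C + D) * B = A * D - C * B := by ring
  rw [hdet]
  refine isPalindromic_of_reflect_eq ?_ ?_
  · refine (natDegree_sub_le _ _).trans (max_le ?_ ?_) <;>
      exact natDegree_mul_le.trans (by omega)
  · rw [reflect_sub, two_mul, reflect_mul _ _ hA hD, reflect_mul _ _ hC hB, hAD, hDA, hBB, hCC,
      mul_comm D, mul_comm C]

theorem reflect_sum_X_pow_card {R α : Type*} [Semiring R] [Fintype α] [DecidableEq α]
    (s : Finset (Finset α)) :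
    (∑ I ∈ s, (X : R[X]) ^ #I).reflect (Fintype.card α) = ∑ I ∈ s, X ^ #Iᶜ := by
  induction s using Finset.cons_induction with
  | empty => simp
  | cons I s _ ih =>
    rw [sum_cons, sum_cons, reflect_add, ih, reflect_monomial, revAt_le (card_le_univ I),
      card_compl]

section Box

variable {a b : ℕ}

def boxRev (a b : ℕ) : Equiv.Perm (Fin a × Fin b) :=
  Equiv.prodCongr Fin.revPerm Fin.revPerm

@[simp]
theorem boxRev_apply (x : Fin a × Fin b) : boxRev a b x = (x.1.rev, x.2.rev) := rfl

theorem boxRev_symm : (boxRev a b).symm = boxRev a b := by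
  simp [boxRev, Fin.revPerm_symm]

@[simp]
theorem boxRev_boxRev (x : Fin a × Fin b) : boxRev a b (boxRev a b x) = x := by
  simp

def boxFlip (I : Finset (Fin a × Fin b)) : Finset (Fin a × Fin b) :=
  Iᶜ.map (boxRev a b).toEmbedding

theorem mem_boxFlip {I : Finset (Fin a × Fin b)} {x : Fin a × Fin b} :
    x ∈ boxFlip I ↔ boxRev a b x ∉ I := by
  rw [boxFlip, mem_map_equiv, boxRev_symm, mem_compl]

theorem boxFlip_boxFlip (I : Finset (Fin a × Fin b)) : boxFlip (boxFlip I) = I := by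
  ext x
  simp [mem_boxFlip]

theorem card_boxFlip (I : Finset (Fin a × Fin b)) : #(boxFlip I) = #Iᶜ :=
  card_map _

theorem boxFlip_mem_boxLowerSets {I : Finset (Fin a × Fin b)} (hI : I ∈ boxLowerSets a b) :
    boxFlip I ∈ boxLowerSets a b := by
  simp only [boxLowerSets, mem_filter, mem_univ, true_and, mem_boxFlip] at hI ⊢
  intro p hp p' h1 h2 hp'
  exact hp (hI _ hp' _ (by simpa using h1) (by simpa using h2))

theorem natDegree_boxEntry_le (P : Finset (Fin a × Fin b) → Prop) [DecidablePred P] :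
    (boxEntry a b P).natDegree ≤ a * b :=
  natDegree_sum_le_of_forall_le _ _ fun I _ => by
    simpa [natDegree_X_pow] using card_le_univ I

theorem boxEntry_eq_add (P Q : Finset (Fin a × Fin b) → Prop) [DecidablePred P]
    [DecidablePred Q] :
    boxEntry a b P = boxEntry a b (fun I => P I ∧ Q I) + boxEntry a b (fun I => P I ∧ ¬Q I) := by
  simp only [boxEntry, ← filter_filter, sum_filter_add_sum_filter_not]

theorem reflect_boxEntry (P : Finset (Fin a × Fin b) → Prop) [DecidablePred P] :
    (boxEntry a b P).reflect (a * b) = boxEntry a b (fun I => P (boxFlip I)) := by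
  have hcard : a * b = Fintype.card (Fin a × Fin b) := by simp
  rw [boxEntry, hcard, reflect_sum_X_pow_card, boxEntry]
  refine sum_nbij' boxFlip boxFlip ?_ ?_ (fun I _ => boxFlip_boxFlip I)
    (fun I _ => boxFlip_boxFlip I) (fun I _ => by rw [card_boxFlip])
  · intro I hI
    simp only [mem_filter] at hI ⊢
    exact ⟨boxFlip_mem_boxLowerSets hI.1, by rw [boxFlip_boxFlip]; exact hI.2⟩
  · intro I hI
    simp only [mem_filter] at hI ⊢
    exact ⟨boxFlip_mem_boxLowerSets hI.1, hI.2⟩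

end Box

/-- the determinant `M₁₁·M₂₂ − M₁₂·M₂₁` of the rank matrix of the box poset
`B_{a×b}` is `(2ab)`-palindromic. -/
theorem box_det_palindromic
    (a b : ℕ) (ha : 1 ≤ a) (hb : 1 ≤ b)
    (xL xR : Fin a × Fin b)
    (hxL : xL = (⟨a - 1, by omega⟩, ⟨0, by omega⟩))
    (hxR : xR = (⟨0, by omega⟩, ⟨b - 1, by omega⟩)) :
    IsPalindromic
      (boxEntry a b (fun I => xR ∈ I) * boxEntry a b (fun I => xR ∉ I ∧ xL ∉ I) -
       boxEntry a b (fun I => xR ∉ I) * boxEntry a b (fun I => xR ∈ I ∧ xL ∉ I))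
      (2 * (a * b)) := by
  have hrevR : boxRev a b xR = xL := by
    subst hxL hxR; ext <;> simp [Fin.val_rev]; omega
  have hrevL : boxRev a b xL = xR := by
    rw [← hrevR, boxRev_boxRev]
  have hflip (I) : (xR ∈ boxFlip I ↔ xL ∉ I) ∧ (xL ∈ boxFlip I ↔ xR ∉ I) := by
    rw [mem_boxFlip, mem_boxFlip, hrevR, hrevL]; exact ⟨Iff.rfl, Iff.rfl⟩
  rw [boxEntry_eq_add (fun I => xR ∈ I) (fun I => xL ∈ I),
    boxEntry_eq_add (fun I => xR ∉ I) (fun I => xL ∈ I)]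
  refine isPalindromic_det_of_reflect (natDegree_boxEntry_le _) (natDegree_boxEntry_le _)
    (natDegree_boxEntry_le _) (natDegree_boxEntry_le _) ?_ ?_ ?_ <;>
  · rw [reflect_boxEntry]
    congr! 2 with I
    simp only [hflip]
    tauto
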